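/- arXiv:2505.02141 — 5 statements merged into one kernel-verified Lean document; each statement's English description precedes it below -/
import Mathlib

section
/- g(t)/√t → 2^{1/4} as t → +∞. -/
open Real Filter MeasureTheory Topology intervalIntegral

noncomputable def Faux : ℝ → ℝ := fun y => ∫ s in (0:ℝ)..y, Real.sqrt (1 + 2*s^2)

lemma contInt : Continuous fun s : ℝ => Real.sqrt (1 + 2*s^2) := by continuity

lemma Faux_hasDeriv (y : ℝ) : HasDerivAt Faux (Real.sqrt (1 + 2*y^2)) y :=
  intervalIntegral.integral_hasDerivAt_right (contInt.intervalIntegrable _ _)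
    (contInt.stronglyMeasurableAtFilter _ _) contInt.continuousAt

lemma Faux_strictMono : StrictMono Faux := by
  intro a b hab
  have h : Faux b - Faux a = ∫ s in a..b, Real.sqrt (1 + 2*s^2) :=
    intervalIntegral.integral_interval_sub_left (contInt.intervalIntegrable _ _)
      (contInt.intervalIntegrable _ _)
  have hpos : 0 < ∫ s in a..b, Real.sqrt (1 + 2*s^2) :=
    intervalIntegral.intervalIntegral_pos_of_pos (contInt.intervalIntegrable _ _)
      (fun x => Real.sqrt_pos.2 (by nlinarith [sq_nonneg x])) hab
  linarith

lemma Faux_zero : Faux 0 = 0 := intervalIntegral.integral_same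

lemma Faux_cont : Continuous Faux :=
  (Differentiable.continuous fun y => (Faux_hasDeriv y).differentiableAt)

lemma Faux_key (g : ℝ → ℝ) (hsmooth : ContDiff ℝ (⊤ : ℕ∞) g) (hg0 : g 0 = 0)
    (hderiv : ∀ t : ℝ, 0 ≤ t → deriv g t = 1 / Real.sqrt (1 + 2 * g t ^ 2)) :
    ∀ t : ℝ, 0 ≤ t → Faux (g t) = t := by
  intro t ht
  have hgd : Differentiable ℝ g := hsmooth.differentiable (by simp)
  set φ : ℝ → ℝ := fun u => Faux (g u) - u with hφ
  have hcont : Continuous φ := (Faux_cont.comp hgd.continuous).sub continuous_id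
  have hd : ∀ x ∈ Set.Ico (0:ℝ) t, HasDerivWithinAt φ 0 (Set.Ici x) x := by
    intro x hx
    have h1 : HasDerivAt g (deriv g x) x := (hgd x).hasDerivAt
    have h2 : HasDerivAt (fun u => Faux (g u))
        (Real.sqrt (1 + 2 * (g x)^2) * deriv g x) x :=
      (Faux_hasDeriv (g x)).comp x h1
    have hs : (0:ℝ) < Real.sqrt (1 + 2 * (g x)^2) :=
      Real.sqrt_pos.2 (by nlinarith [sq_nonneg (g x)])
    have h3 : Real.sqrt (1 + 2 * (g x)^2) * deriv g x = 1 := by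
      rw [hderiv x hx.1]
      field_simp
    have h4 : HasDerivAt φ (Real.sqrt (1 + 2 * (g x)^2) * deriv g x - 1) x :=
      h2.sub (hasDerivAt_id x)
    rw [h3, sub_self] at h4
    exact h4.hasDerivWithinAt
  have := constant_of_has_deriv_right_zero hcont.continuousOn hd t
    (Set.right_mem_Icc.2 ht)
  have h0 : φ 0 = 0 := by simp [hφ, hg0, Faux_zero]
  have : φ t = 0 := by rw [this, h0]
  simpa [hφ, sub_eq_zero] using this

lemma Faux_lb {y : ℝ} (hy : 0 ≤ y) : Real.sqrt 2 / 2 * y^2 ≤ Faux y := by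
  have h1 : (∫ s in (0:ℝ)..y, Real.sqrt 2 * s) ≤ Faux y := by
    apply intervalIntegral.integral_mono_on hy
    · exact Continuous.intervalIntegrable (by continuity) _ _
    · exact contInt.intervalIntegrable _ _
    · intro x hx
      rw [show (2:ℝ) * x^2 = (Real.sqrt 2 * x)^2 by
        rw [mul_pow, Real.sq_sqrt (by norm_num)]]
      nlinarith [Real.sq_sqrt (show (0:ℝ) ≤ 1 + (Real.sqrt 2 * x)^2 by positivity),
        Real.sqrt_nonneg (1 + (Real.sqrt 2 * x)^2), Real.sqrt_nonneg 2, hx.1,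
        Real.sqrt_le_sqrt (show (Real.sqrt 2 * x)^2 ≤ 1 + (Real.sqrt 2 * x)^2 by linarith),
        Real.sqrt_sq (mul_nonneg (Real.sqrt_nonneg 2) hx.1)]
  have h2 : (∫ s in (0:ℝ)..y, Real.sqrt 2 * s) = Real.sqrt 2 / 2 * y^2 := by
    rw [intervalIntegral.integral_const_mul, integral_id]
    ring
  linarith

lemma Faux_ub {y : ℝ} (hy : 0 ≤ y) : Faux y ≤ y + Real.sqrt 2 / 2 * y^2 := by
  have h1 : Faux y ≤ ∫ s in (0:ℝ)..y, (1 + Real.sqrt 2 * s) := by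
    apply intervalIntegral.integral_mono_on hy
    · exact contInt.intervalIntegrable _ _
    · exact Continuous.intervalIntegrable (by continuity) _ _
    · intro x hx
      have hxx : 0 ≤ 1 + Real.sqrt 2 * x := by nlinarith [Real.sqrt_nonneg 2, hx.1]
      rw [show (1:ℝ) + 2 * x^2 = (1 + Real.sqrt 2 * x)^2 - 2 * Real.sqrt 2 * x by
        nlinarith [Real.sq_sqrt (show (0:ℝ) ≤ 2 by norm_num)]]
      calc Real.sqrt ((1 + Real.sqrt 2 * x)^2 - 2 * Real.sqrt 2 * x)
          ≤ Real.sqrt ((1 + Real.sqrt 2 * x)^2) := by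
            apply Real.sqrt_le_sqrt
            nlinarith [Real.sqrt_nonneg 2, hx.1]
        _ = 1 + Real.sqrt 2 * x := Real.sqrt_sq hxx
  have h2 : (∫ s in (0:ℝ)..y, (1 + Real.sqrt 2 * s)) = y + Real.sqrt 2 / 2 * y^2 := by
    rw [intervalIntegral.integral_add (continuous_const.intervalIntegrable _ _)
      (Continuous.intervalIntegrable (by continuity) _ _),
      intervalIntegral.integral_const_mul, integral_id, intervalIntegral.integral_const,
      smul_eq_mul]
    ring
  linarith

lemma c_sq : ((2:ℝ) ^ ((1:ℝ)/4))^2 = Real.sqrt 2 := by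
  rw [← Real.rpow_natCast ((2:ℝ) ^ ((1:ℝ)/4)) 2, ← Real.rpow_mul (by norm_num : (0:ℝ) ≤ 2),
    Real.sqrt_eq_rpow]
  norm_num

lemma c_pos : (0:ℝ) < (2:ℝ) ^ ((1:ℝ)/4) := Real.rpow_pos_of_pos (by norm_num) _

lemma cval : Real.sqrt (Real.sqrt 2 / 2) = 1 / ((2:ℝ) ^ ((1:ℝ)/4)) := by
  have h2 : Real.sqrt 2 * Real.sqrt 2 = 2 := Real.mul_self_sqrt (by norm_num)
  have hs2 : (0:ℝ) < Real.sqrt 2 := Real.sqrt_pos.2 (by norm_num)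
  have h : Real.sqrt 2 / 2 = (1 / ((2:ℝ) ^ ((1:ℝ)/4)))^2 := by
    rw [div_pow, one_pow, c_sq]
    rw [div_eq_div_iff (by norm_num) hs2.ne']
    nlinarith
  rw [h, Real.sqrt_sq (by positivity)]

lemma lim_aux : Tendsto (fun y : ℝ => 1 / Real.sqrt (1/y + Real.sqrt 2/2)) atTop
    (nhds ((2:ℝ) ^ ((1:ℝ)/4))) := by
  have h1 : Tendsto (fun y : ℝ => 1/y + Real.sqrt 2/2) atTop (nhds (0 + Real.sqrt 2/2)) :=
    ((tendsto_inv_atTop_zero).congr (fun y => (one_div y).symm)).add tendsto_const_nhds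
  have h2 : Tendsto (fun y : ℝ => Real.sqrt (1/y + Real.sqrt 2/2)) atTop
      (nhds (Real.sqrt (0 + Real.sqrt 2/2))) :=
    (Real.continuous_sqrt.tendsto _).comp h1
  have hne : Real.sqrt (0 + Real.sqrt 2/2) ≠ 0 := by
    rw [zero_add]
    positivity
  have h3 := h2.inv₀ hne
  have : (Real.sqrt (0 + Real.sqrt 2/2))⁻¹ = (2:ℝ) ^ ((1:ℝ)/4) := by
    rw [zero_add, cval]
    field_simp
  rw [this] at h3
  exact h3.congr (fun y => (one_div _).symm)

/-- Lemma 2.1(5): `g(t)/√t → 2^{1/4}` as `t → +∞`. -/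
theorem stmt_3 (g : ℝ → ℝ) (hodd : Odd g) (hsmooth : ContDiff ℝ (⊤ : ℕ∞) g)
    (hg0 : g 0 = 0)
    (hderiv : ∀ t : ℝ, 0 ≤ t → deriv g t = 1 / Real.sqrt (1 + 2 * g t ^ 2)) :
    Filter.Tendsto (fun t : ℝ => g t / Real.sqrt t) Filter.atTop
      (nhds ((2 : ℝ) ^ ((1 : ℝ) / 4))) := by
  have key : ∀ t : ℝ, 0 ≤ t → Faux (g t) = t := Faux_key g hsmooth hg0 hderiv
  have gtop : Tendsto g atTop atTop := by
    rw [tendsto_atTop_atTop]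
    intro M
    refine ⟨max 0 (Faux (max M 0) + 1), fun t ht => ?_⟩
    have ht0 : (0:ℝ) ≤ t := le_trans (le_max_left _ _) ht
    have h1 : Faux (max M 0) < Faux (g t) := by
      rw [key t ht0]
      have := le_trans (le_max_right _ _) ht
      linarith
    exact le_trans (le_max_left _ _) (Faux_strictMono.lt_iff_lt.1 h1).le
  have hev : ∀ᶠ t : ℝ in atTop, 1 ≤ g t ∧ 0 ≤ t :=
    (gtop.eventually_ge_atTop 1).and (eventually_ge_atTop 0)
  refine tendsto_of_tendsto_of_tendsto_of_le_of_le' (lim_aux.comp gtop) tendsto_const_nhds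
    ?_ ?_
  · filter_upwards [hev] with t hh
    obtain ⟨hy1, ht0⟩ := hh
    have hk := key t ht0
    set y := g t with hy
    have hy0 : (0:ℝ) < y := lt_of_lt_of_le one_pos hy1
    have hA : (0:ℝ) < 1/y + Real.sqrt 2/2 := by positivity
    have htpos : (0:ℝ) < t := by
      have hF := Faux_lb hy0.le
      rw [hk] at hF
      have hs2 : (0:ℝ) < Real.sqrt 2 := Real.sqrt_pos.2 (by norm_num)
      have hy2 : (1:ℝ) ≤ y^2 := by nlinarith
      nlinarith
    have hst : (0:ℝ) < Real.sqrt t := Real.sqrt_pos.2 htpos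
    have htle : t ≤ y^2 * (1/y + Real.sqrt 2/2) := by
      have h1 := Faux_ub hy0.le
      have h2 : y^2 * (1/y + Real.sqrt 2/2) = y + Real.sqrt 2/2 * y^2 := by
        field_simp
      linarith [hk ▸ h1]
    have hsq : Real.sqrt t ≤ y * Real.sqrt (1/y + Real.sqrt 2/2) := by
      have := Real.sqrt_le_sqrt htle
      rwa [Real.sqrt_mul (sq_nonneg y), Real.sqrt_sq hy0.le] at this
    show 1 / Real.sqrt (1/y + Real.sqrt 2/2) ≤ y / Real.sqrt t
    rw [div_le_div_iff₀ (Real.sqrt_pos.2 hA) hst, one_mul]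
    exact hsq
  · filter_upwards [hev] with t hh
    obtain ⟨hy1, ht0⟩ := hh
    have hk := key t ht0
    set y := g t with hy
    have hy0 : (0:ℝ) < y := lt_of_lt_of_le one_pos hy1
    have htpos : (0:ℝ) < t := by
      have hF := Faux_lb hy0.le
      rw [hk] at hF
      have hs2 : (0:ℝ) < Real.sqrt 2 := Real.sqrt_pos.2 (by norm_num)
      have hy2 : (1:ℝ) ≤ y^2 := by nlinarith
      nlinarith
    have hst : (0:ℝ) < Real.sqrt t := Real.sqrt_pos.2 htpos
    have hlb : Real.sqrt (Real.sqrt 2/2) * y ≤ Real.sqrt t := by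
      have h1 : Real.sqrt 2/2 * y^2 ≤ t := Faux_lb hy0.le |>.trans_eq hk
      have := Real.sqrt_le_sqrt h1
      rwa [Real.sqrt_mul (by positivity) (y^2), Real.sqrt_sq hy0.le] at this
    rw [cval] at hlb
    show y / Real.sqrt t ≤ (2:ℝ) ^ ((1:ℝ)/4)
    rw [div_le_iff₀ hst]
    have hcpos := c_pos
    calc y = (2:ℝ) ^ ((1:ℝ)/4) * (1 / ((2:ℝ) ^ ((1:ℝ)/4)) * y) := by field_simp
      _ ≤ (2:ℝ) ^ ((1:ℝ)/4) * Real.sqrt t := by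
          exact mul_le_mul_of_nonneg_left hlb hcpos.le
end

section
/- For all t > 0, g(t)/2 ≤ t·g'(t) ≤ g(t). -/
open Real Filter MeasureTheory

/-- Lemma 2.1(6): for all `t > 0`, `g(t)/2 ≤ t g'(t) ≤ g(t)`. -/
theorem stmt_4 (g : ℝ → ℝ) (hodd : Odd g) (hsmooth : ContDiff ℝ (⊤ : ℕ∞) g)
    (hg0 : g 0 = 0)
    (hderiv : ∀ t : ℝ, 0 ≤ t → deriv g t = 1 / Real.sqrt (1 + 2 * g t ^ 2)) :
    ∀ t : ℝ, 0 < t → g t / 2 ≤ t * deriv g t ∧ t * deriv g t ≤ g t := by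
  have hdiff : Differentiable ℝ g := hsmooth.differentiable (by simp)
  have hu_pos : ∀ s : ℝ, (0:ℝ) < 1 + 2 * g s ^ 2 := fun s => by positivity
  have hsq_pos : ∀ s : ℝ, (0:ℝ) < Real.sqrt (1 + 2 * g s ^ 2) := fun s =>
    Real.sqrt_pos.2 (hu_pos s)
  set φ : ℝ → ℝ := fun t => g t * Real.sqrt (1 + 2 * g t ^ 2) with hφ
  have hφderiv : ∀ s : ℝ, 0 ≤ s →
      HasDerivAt φ ((1 + 4 * g s ^ 2) / (1 + 2 * g s ^ 2)) s := by
    intro s hs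
    have hd : HasDerivAt g (1 / Real.sqrt (1 + 2 * g s ^ 2)) s := by
      rw [← hderiv s hs]; exact (hdiff s).hasDerivAt
    have hu : HasDerivAt (fun t => 1 + 2 * g t ^ 2)
        (4 * g s * (1 / Real.sqrt (1 + 2 * g s ^ 2))) s := by
      have h := ((hd.pow 2).const_mul (2:ℝ)).const_add (1:ℝ)
      refine h.congr_deriv ?_
      norm_num
      ring
    have hsqrt : HasDerivAt (fun t => Real.sqrt (1 + 2 * g t ^ 2))
        ((4 * g s * (1 / Real.sqrt (1 + 2 * g s ^ 2))) /
          (2 * Real.sqrt (1 + 2 * g s ^ 2))) s :=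
      hu.sqrt (ne_of_gt (hu_pos s))
    have hm := hd.mul hsqrt
    refine hm.congr_deriv ?_
    have h1 : Real.sqrt (1 + 2 * g s ^ 2) * Real.sqrt (1 + 2 * g s ^ 2)
        = 1 + 2 * g s ^ 2 := Real.mul_self_sqrt (hu_pos s).le
    have hne : Real.sqrt (1 + 2 * g s ^ 2) ≠ 0 := (hsq_pos s).ne'
    field_simp
    nlinarith [h1, hsq_pos s]
  have hφcont : Continuous φ := by
    apply hdiff.continuous.mul
    exact (continuous_const.add (continuous_const.mul
      (hdiff.continuous.pow 2))).sqrt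
  have hkey : ∀ t : ℝ, 0 ≤ t → t ≤ φ t ∧ φ t ≤ 2 * t := by
    intro t ht
    have hmono1 : MonotoneOn (fun t => φ t - t) (Set.Ici 0) := by
      apply monotoneOn_of_deriv_nonneg (convex_Ici 0)
        ((hφcont.sub continuous_id).continuousOn)
      · intro x hx
        rw [interior_Ici] at hx
        exact (((hφderiv x (le_of_lt hx)).sub (hasDerivAt_id x)).differentiableAt).differentiableWithinAt
      · intro x hx
        rw [interior_Ici] at hx
        rw [((hφderiv x (le_of_lt hx)).sub (hasDerivAt_id x)).deriv]
        rw [sub_nonneg, le_div_iff₀ (hu_pos x)]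
        nlinarith [sq_nonneg (g x)]
    have hmono2 : MonotoneOn (fun t => 2 * t - φ t) (Set.Ici 0) := by
      apply monotoneOn_of_deriv_nonneg (convex_Ici 0)
        (((continuous_const.mul continuous_id).sub hφcont).continuousOn)
      · intro x hx
        rw [interior_Ici] at hx
        exact ((((hasDerivAt_id x).const_mul (2:ℝ)).sub
          (hφderiv x (le_of_lt hx))).differentiableAt).differentiableWithinAt
      · intro x hx
        rw [interior_Ici] at hx
        change 0 ≤ deriv ((fun y => 2 * id y) - φ) x
        rw [(((hasDerivAt_id x).const_mul (2:ℝ)).sub (hφderiv x (le_of_lt hx))).deriv]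
        rw [sub_nonneg, div_le_iff₀ (hu_pos x)]
        nlinarith [hu_pos x]
    have hφ0 : φ 0 = 0 := by simp [hφ, hg0]
    have h1 := hmono1 (Set.self_mem_Ici) (Set.mem_Ici.2 ht) ht
    have h2 := hmono2 (Set.self_mem_Ici) (Set.mem_Ici.2 ht) ht
    simp [hφ0] at h1 h2
    constructor <;> linarith
  intro t ht
  obtain ⟨h1, h2⟩ := hkey t ht.le
  rw [hderiv t ht.le]
  have hS := hsq_pos t
  constructor
  · rw [mul_one_div, div_le_div_iff₀ (by norm_num) hS]
    calc g t * Real.sqrt (1 + 2 * g t ^ 2) = φ t := rfl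
    _ ≤ 2 * t := h2
    _ = t * 2 := by ring
  · rw [mul_one_div, div_le_iff₀ hS]
    calc t ≤ φ t := h1
    _ = g t * Real.sqrt (1 + 2 * g t ^ 2) := rfl
end

section
/- There exists a constant C > 0 such that g(t) ≥ C|t| for |t| ≤ 1 and g(t) ≥ C|t|^{1/2} for |t| > 1, for all t ≥ 0 (with the corresponding odd extension for t < 0). -/
open Real Filter MeasureTheory

/-- Lemma 2.1(9): there exists `C > 0` with `g(t) ≥ C|t|` for `0 ≤ t ≤ 1` and
`g(t) ≥ C|t|^{1/2}` for `t > 1`. -/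
theorem stmt_7 (g : ℝ → ℝ) (hodd : Odd g) (hsmooth : ContDiff ℝ (⊤ : ℕ∞) g)
    (hg0 : g 0 = 0)
    (hderiv : ∀ t : ℝ, 0 ≤ t → deriv g t = 1 / Real.sqrt (1 + 2 * g t ^ 2)) :
    ∃ C : ℝ, 0 < C ∧ ∀ t : ℝ, 0 ≤ t →
      (|t| ≤ 1 → C * |t| ≤ g t) ∧ (1 < |t| → C * |t| ^ ((1 : ℝ) / 2) ≤ g t) := by
  have hdiff : Differentiable ℝ g := hsmooth.differentiable (by simp)
  have hg' : ∀ t : ℝ, HasDerivAt g (deriv g t) t := fun t => (hdiff t).hasDerivAt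
  have hpos : ∀ t : ℝ, (0:ℝ) < Real.sqrt (1 + 2 * g t ^ 2) := by
    intro t; apply Real.sqrt_pos.2; positivity
  have hone : ∀ t : ℝ, (1:ℝ) ≤ Real.sqrt (1 + 2 * g t ^ 2) := by
    intro t
    nlinarith [Real.sq_sqrt (show (0:ℝ) ≤ 1 + 2 * g t ^ 2 by positivity),
      hpos t, sq_nonneg (g t)]
  -- g t ≤ t on [0, ∞)
  have hle : ∀ t : ℝ, 0 ≤ t → g t ≤ t := by
    intro t ht
    have hmono : MonotoneOn (fun s => s - g s) (Set.Ici (0:ℝ)) := by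
      apply monotoneOn_of_deriv_nonneg (f := fun s => s - g s) (convex_Ici 0)
        (Continuous.continuousOn (continuous_id.sub hdiff.continuous))
        ((differentiable_id.sub hdiff).differentiableOn)
      intro x hx
      rw [interior_Ici] at hx
      have hd : HasDerivAt (fun s => s - g s) (1 - deriv g x) x :=
        (hasDerivAt_id x).sub (hg' x)
      rw [hd.deriv, hderiv x (le_of_lt hx)]
      have := hone x
      have := hpos x
      rw [sub_nonneg, div_le_one (by positivity)]
      linarith
    have h0 : (0:ℝ) - g 0 ≤ t - g t := hmono (Set.self_mem_Ici) (Set.mem_Ici.2 ht) ht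
    rw [hg0] at h0
    linarith
  -- g t ≥ 0 on [0, ∞)
  have hnn : ∀ t : ℝ, 0 ≤ t → 0 ≤ g t := by
    intro t ht
    have hmono : MonotoneOn g (Set.Ici (0:ℝ)) := by
      apply monotoneOn_of_deriv_nonneg (convex_Ici 0)
        hdiff.continuous.continuousOn hdiff.differentiableOn
      intro x hx
      rw [interior_Ici] at hx
      rw [hderiv x (le_of_lt hx)]
      positivity
    have := hmono (Set.self_mem_Ici) (Set.mem_Ici.2 ht) ht
    simpa [hg0] using this
  -- key: t ≤ g t + g t ^ 2 / √2 on [0, ∞)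
  have hkey : ∀ t : ℝ, 0 ≤ t → t ≤ g t + g t ^ 2 / Real.sqrt 2 := by
    intro t ht
    have hmono : MonotoneOn (fun s => g s + g s ^ 2 / Real.sqrt 2 - s) (Set.Ici (0:ℝ)) := by
      apply monotoneOn_of_deriv_nonneg (f := fun s => g s + g s ^ 2 / Real.sqrt 2 - s)
        (convex_Ici 0)
      · exact Continuous.continuousOn
          (((hdiff.continuous.add ((hdiff.continuous.pow 2).div_const _))).sub continuous_id)
      · exact ((hdiff.add (((hdiff.pow 2)).div_const _)).sub differentiable_id).differentiableOn
      intro x hx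
      rw [interior_Ici] at hx
      have hd : HasDerivAt (fun s => g s + g s ^ 2 / Real.sqrt 2 - s)
          (deriv g x + (2 * g x ^ (2-1) * deriv g x) / Real.sqrt 2 - 1) x :=
        ((hg' x).add (((hg' x).pow 2).div_const _)).sub (hasDerivAt_id x)
      rw [hd.deriv, hderiv x (le_of_lt hx)]
      norm_num
      have hgx : 0 ≤ g x := hnn x (le_of_lt hx)
      have hs2 : (0:ℝ) < Real.sqrt 2 := by positivity
      have hs2sq : Real.sqrt 2 ^ 2 = 2 := Real.sq_sqrt (by norm_num)
      have hS := hpos x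
      have hSsq : Real.sqrt (1 + 2 * g x ^ 2) ^ 2 = 1 + 2 * g x ^ 2 :=
        Real.sq_sqrt (by positivity)
      -- need: 1/S + (2 g x / S)/√2 ≥ 1, i.e. √2 + 2 g x ≥ √2 S,
      -- i.e. 2 + 2√2 g + ... squared comparison
      have hineq : Real.sqrt 2 * Real.sqrt (1 + 2 * g x ^ 2) ≤ Real.sqrt 2 + 2 * g x := by
        nlinarith [sq_nonneg (Real.sqrt 2 + 2 * g x - Real.sqrt 2 * Real.sqrt (1 + 2 * g x ^ 2)),
          mul_pos hs2 hS, sq_nonneg (g x)]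
      rw [← mul_le_mul_iff_right₀ (mul_pos hS hs2), mul_one]
      have hexp : Real.sqrt (1 + 2 * g x ^ 2) * Real.sqrt 2 *
          ((Real.sqrt (1 + 2 * g x ^ 2))⁻¹ +
            2 * g x * (Real.sqrt (1 + 2 * g x ^ 2))⁻¹ / Real.sqrt 2)
          = Real.sqrt 2 + 2 * g x := by
        field_simp
      rw [hexp]
      linarith [hineq]
    have h0 : g 0 + g 0 ^ 2 / Real.sqrt 2 - 0 ≤ g t + g t ^ 2 / Real.sqrt 2 - t :=
      hmono (Set.self_mem_Ici) (Set.mem_Ici.2 ht) ht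
    rw [hg0] at h0
    norm_num at h0
    linarith
  -- linear bound for 0 ≤ t ≤ 1
  have hlin : ∀ t : ℝ, 0 ≤ t → t ≤ 1 → (1/2) * t ≤ g t := by
    intro t ht ht1
    have h1 := hkey t ht
    have h2 := hle t ht
    have h3 := hnn t ht
    have hs2 : (1:ℝ) ≤ Real.sqrt 2 := by
      rw [show (1:ℝ) = Real.sqrt 1 by simp]
      exact Real.sqrt_le_sqrt (by norm_num)
    have : g t ^ 2 / Real.sqrt 2 ≤ g t := by
      rw [div_le_iff₀ (by linarith)]
      nlinarith
    linarith
  refine ⟨1/2, by norm_num, fun t ht => ?_⟩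
  rw [abs_of_nonneg ht]
  constructor
  · exact fun h1 => hlin t ht h1
  · intro h1
    have hg1 : (1/2 : ℝ) ≤ g 1 := by simpa using hlin 1 (by norm_num) (by norm_num)
    have hmono : MonotoneOn g (Set.Ici (0:ℝ)) := by
      apply monotoneOn_of_deriv_nonneg (convex_Ici 0)
        hdiff.continuous.continuousOn hdiff.differentiableOn
      intro x hx
      rw [interior_Ici] at hx
      rw [hderiv x (le_of_lt hx)]
      positivity
    have hgt : (1/2 : ℝ) ≤ g t := le_trans hg1
      (hmono (Set.mem_Ici.2 (by norm_num)) (Set.mem_Ici.2 ht) (le_of_lt h1))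
    have h2 := hkey t ht
    have hs2 : (1:ℝ) ≤ Real.sqrt 2 := by
      rw [show (1:ℝ) = Real.sqrt 1 by simp]
      exact Real.sqrt_le_sqrt (by norm_num)
    -- t ≤ g + g²/√2 ≤ g + g² ≤ 2g² + g² = 3g² ≤ 4 g²
    have h3 : t ≤ (2 * g t)^2 := by
      have : g t ^ 2 / Real.sqrt 2 ≤ g t ^ 2 := by
        rw [div_le_iff₀ (by linarith)]
        nlinarith
      nlinarith
    rw [← Real.sqrt_eq_rpow]
    calc (1/2) * Real.sqrt t ≤ (1/2) * Real.sqrt ((2 * g t)^2) := by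
          have := Real.sqrt_le_sqrt h3; linarith
      _ = (1/2) * (2 * g t) := by rw [Real.sqrt_sq (by linarith)]
      _ = g t := by ring
end

section
/- The function t ↦ g(t) g'(t) / t is (weakly) decreasing on (0, ∞). -/
open Real Filter MeasureTheory

/-- Lemma 2.1(11): `t ↦ g(t) g'(t) / t` is decreasing on `(0, ∞)`. -/
theorem stmt_9 (g : ℝ → ℝ) (hodd : Odd g) (hsmooth : ContDiff ℝ (⊤ : ℕ∞) g)
    (hg0 : g 0 = 0)
    (hderiv : ∀ t : ℝ, 0 ≤ t → deriv g t = 1 / Real.sqrt (1 + 2 * g t ^ 2)) :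
    AntitoneOn (fun t : ℝ => g t * deriv g t / t) (Set.Ioi (0 : ℝ)) := by
  have hdiff : Differentiable ℝ g := hsmooth.differentiable (by simp)
  have hsqrtpos : ∀ x : ℝ, 0 < Real.sqrt (1 + 2 * g x ^ 2) := fun x =>
    Real.sqrt_pos.mpr (by positivity)
  -- g is strictly monotone on [0, ∞)
  have hsm : StrictMonoOn g (Set.Ici 0) := by
    apply strictMonoOn_of_deriv_pos (convex_Ici 0) hdiff.continuous.continuousOn
    intro x hx
    rw [interior_Ici] at hx
    rw [hderiv x hx.le]
    exact one_div_pos.mpr (hsqrtpos x)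
  have hmono : MonotoneOn g (Set.Ici 0) := hsm.monotoneOn
  have hgnn : ∀ t : ℝ, 0 ≤ t → 0 ≤ g t := fun t ht => by
    have := hmono (Set.self_mem_Ici) (Set.mem_Ici.mpr ht) ht
    rwa [hg0] at this
  -- sqrt(1 + 2 g²) is monotone on [0,∞)
  have hsq : ∀ s t : ℝ, 0 ≤ s → s ≤ t →
      Real.sqrt (1 + 2 * g s ^ 2) ≤ Real.sqrt (1 + 2 * g t ^ 2) := by
    intro s t hs hst
    apply Real.sqrt_le_sqrt
    have h1 : g s ≤ g t := hmono (Set.mem_Ici.mpr hs) (Set.mem_Ici.mpr (hs.trans hst)) hst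
    have h2 : g s ^ 2 ≤ g t ^ 2 := pow_le_pow_left₀ (hgnn s hs) h1 2
    linarith
  -- deriv g is antitone on [0,∞), hence g is concave there
  have hanti : AntitoneOn (deriv g) (Set.Ici 0) := by
    intro s hs t ht hst
    rw [hderiv s hs, hderiv t ht]
    exact one_div_le_one_div_of_le (hsqrtpos s) (hsq s t hs hst)
  have hconc : ConcaveOn ℝ (Set.Ici 0) g := by
    apply AntitoneOn.concaveOn_of_deriv (convex_Ici 0) hdiff.continuous.continuousOn
      hdiff.differentiableOn
    rw [interior_Ici]
    exact hanti.mono (Set.Ioi_subset_Ici le_rfl)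
  -- slope from zero is antitone
  have hslope : ∀ s t : ℝ, 0 < s → s ≤ t → g t / t ≤ g s / s := by
    intro s t hs hst
    have ht : (0:ℝ) < t := lt_of_lt_of_le hs hst
    have hb : 0 ≤ s / t := by positivity
    have ha : 0 ≤ 1 - s / t := by
      have : s / t ≤ 1 := (div_le_one ht).mpr hst
      linarith
    have key := hconc.2 (Set.self_mem_Ici) (Set.mem_Ici.mpr ht.le) ha hb (by ring)
    rw [hg0] at key
    simp only [smul_eq_mul, mul_zero, zero_add, smul_zero] at key
    have hsts : s / t * t = s := by field_simp
    rw [hsts] at key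
    rw [div_le_div_iff₀ ht hs]
    calc g t * s = (s / t * g t) * t := by field_simp
      _ ≤ g s * t := by nlinarith [key]
  -- combine
  intro s hs t ht hst
  simp only [Set.mem_Ioi] at hs ht
  show g t * deriv g t / t ≤ g s * deriv g s / s
  rw [hderiv s hs.le, hderiv t ht.le]
  have e : ∀ x : ℝ, g x * (1 / Real.sqrt (1 + 2 * g x ^ 2)) / x
      = (g x / x) * (1 / Real.sqrt (1 + 2 * g x ^ 2)) := by intro x; ring
  rw [e s, e t]
  apply mul_le_mul (hslope s t hs hst)
    (one_div_le_one_div_of_le (hsqrtpos s) (hsq s t hs.le hst))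
    (le_of_lt (one_div_pos.mpr (hsqrtpos t)))
    (div_nonneg (hgnn s hs.le) hs.le)
end

section
/- For every real p ≥ 3, the function t ↦ g(t)^p g'(t) / t is (weakly) increasing on (0, ∞). -/
open Real Filter MeasureTheory

/-- Lemma 2.1(12): for every `p ≥ 3`, the map `t ↦ g(t)^p g'(t) / t` is increasing
on `(0, ∞)`. -/
theorem stmt_10 (g : ℝ → ℝ) (hodd : Odd g) (hsmooth : ContDiff ℝ (⊤ : ℕ∞) g)
    (hg0 : g 0 = 0)
    (hderiv : ∀ t : ℝ, 0 ≤ t → deriv g t = 1 / Real.sqrt (1 + 2 * g t ^ 2)) :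
    ∀ p : ℝ, 3 ≤ p →
      MonotoneOn (fun t : ℝ => g t ^ p * deriv g t / t) (Set.Ioi (0 : ℝ)) := by
  intro p hp
  have hdg : Differentiable ℝ g := hsmooth.differentiable (by simp)
  have hS : ∀ t : ℝ, (0:ℝ) < 1 + 2 * g t ^ 2 := fun t => by positivity
  have hSpos : ∀ t : ℝ, 0 < Real.sqrt (1 + 2 * g t ^ 2) :=
    fun t => Real.sqrt_pos.2 (hS t)
  have hSsq : ∀ t : ℝ, Real.sqrt (1 + 2 * g t ^ 2) ^ 2 = 1 + 2 * g t ^ 2 :=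
    fun t => Real.sq_sqrt (hS t).le
  -- g is positive on (0, ∞)
  have hmono : StrictMonoOn g (Set.Ici 0) := by
    apply strictMonoOn_of_deriv_pos (convex_Ici 0) hdg.continuous.continuousOn
    intro x hx
    rw [interior_Ici] at hx
    rw [hderiv x (le_of_lt hx)]
    positivity
  have hgpos : ∀ t : ℝ, 0 < t → 0 < g t := fun t ht => by
    have := hmono Set.self_mem_Ici (Set.mem_Ici.2 ht.le) ht
    simpa [hg0] using this
  -- basic HasDerivAt facts at points of (0, ∞)
  have hg' : ∀ t : ℝ, 0 < t →
      HasDerivAt g (1 / Real.sqrt (1 + 2 * g t ^ 2)) t := fun t ht => by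
    have := hdg.differentiableAt.hasDerivAt (x := t)
    rwa [hderiv t ht.le] at this
  have hu : ∀ t : ℝ, 0 < t →
      HasDerivAt (fun x => 1 + 2 * g x ^ 2)
        (2 * (2 * g t ^ 1 * (1 / Real.sqrt (1 + 2 * g t ^ 2)))) t := fun t ht => by
    exact (((hg' t ht).pow 2).const_mul 2).const_add 1
  have hsq : ∀ t : ℝ, 0 < t →
      HasDerivAt (fun x => Real.sqrt (1 + 2 * g x ^ 2))
        ((2 * (2 * g t ^ 1 * (1 / Real.sqrt (1 + 2 * g t ^ 2)))) /
          (2 * Real.sqrt (1 + 2 * g t ^ 2))) t := fun t ht =>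
    (hu t ht).sqrt (hS t).ne'
  -- key inequality : g t * sqrt (1 + 2 g t ^ 2) ≤ 2 t for t ≥ 0
  have key : ∀ t : ℝ, 0 ≤ t → g t * Real.sqrt (1 + 2 * g t ^ 2) ≤ 2 * t := by
    set φ : ℝ → ℝ := fun t => 2 * t - g t * Real.sqrt (1 + 2 * g t ^ 2) with hφdef
    have hφd : ∀ t : ℝ, 0 < t →
        HasDerivAt φ (2 * 1 - ((1 / Real.sqrt (1 + 2 * g t ^ 2)) *
          Real.sqrt (1 + 2 * g t ^ 2) + g t *
          ((2 * (2 * g t ^ 1 * (1 / Real.sqrt (1 + 2 * g t ^ 2)))) /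
            (2 * Real.sqrt (1 + 2 * g t ^ 2))))) t := fun t ht =>
      (((hasDerivAt_id t).const_mul 2).sub ((hg' t ht).mul (hsq t ht)))
    have hφmono : MonotoneOn φ (Set.Ici 0) := by
      apply monotoneOn_of_deriv_nonneg (convex_Ici 0)
      · exact ((continuous_const.mul continuous_id).sub
          (hdg.continuous.mul (Real.continuous_sqrt.comp (continuous_const.add (continuous_const.mul (hdg.continuous.pow 2)))))).continuousOn
      · intro x hx
        rw [interior_Ici] at hx
        exact (hφd x hx).differentiableAt.differentiableWithinAt
      · intro x hx
        rw [interior_Ici] at hx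
        rw [(hφd x hx).deriv]
        set S := Real.sqrt (1 + 2 * g x ^ 2) with hSdef
        have hS0 : S ≠ 0 := (hSpos x).ne'
        have e1 : (1 / S) * S = 1 := by field_simp
        have e2 : g x * ((2 * (2 * g x ^ 1 * (1 / S))) / (2 * S)) =
            2 * g x ^ 2 / (1 + 2 * g x ^ 2) := by
          have hSq' : S ^ 2 = 1 + 2 * g x ^ 2 := hSsq x
          rw [← hSq']
          field_simp
        rw [e1, e2]
        have h2 : 2 * g x ^ 2 / (1 + 2 * g x ^ 2) ≤ 1 :=
          (div_le_one (hS x)).2 (by nlinarith [sq_nonneg (g x)])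
        linarith
    intro t ht
    have := hφmono Set.self_mem_Ici (Set.mem_Ici.2 ht) ht
    simp only [hφdef, hg0, mul_zero, zero_mul, sub_zero] at this
    linarith
  -- the auxiliary function H
  set H : ℝ → ℝ := fun t => g t ^ p / (t * Real.sqrt (1 + 2 * g t ^ 2)) with hHdef
  have hHd : ∀ t : ℝ, 0 < t →
      HasDerivAt H
        ((((1 / Real.sqrt (1 + 2 * g t ^ 2)) * p * g t ^ (p - 1)) *
            (t * Real.sqrt (1 + 2 * g t ^ 2)) -
          g t ^ p * (1 * Real.sqrt (1 + 2 * g t ^ 2) + t *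
            ((2 * (2 * g t ^ 1 * (1 / Real.sqrt (1 + 2 * g t ^ 2)))) /
              (2 * Real.sqrt (1 + 2 * g t ^ 2))))) /
          (t * Real.sqrt (1 + 2 * g t ^ 2)) ^ 2) t := fun t ht => by
    have hnum : HasDerivAt (fun x => g x ^ p)
        ((1 / Real.sqrt (1 + 2 * g t ^ 2)) * p * g t ^ (p - 1)) t :=
      (hg' t ht).rpow_const (Or.inr (by linarith))
    have hden : HasDerivAt (fun x => x * Real.sqrt (1 + 2 * g x ^ 2))
        (1 * Real.sqrt (1 + 2 * g t ^ 2) + t *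
          ((2 * (2 * g t ^ 1 * (1 / Real.sqrt (1 + 2 * g t ^ 2)))) /
            (2 * Real.sqrt (1 + 2 * g t ^ 2)))) t :=
      (hasDerivAt_id t).mul (hsq t ht)
    exact hnum.div hden (by positivity)
  have hHmono : MonotoneOn H (Set.Ioi 0) := by
    apply monotoneOn_of_deriv_nonneg (convex_Ioi 0)
    · intro x hx
      exact ((hHd x hx).continuousAt).continuousWithinAt
    · intro x hx
      rw [interior_Ioi] at hx
      exact (hHd x hx).differentiableAt.differentiableWithinAt
    · intro x hx
      rw [interior_Ioi] at hx
      rw [(hHd x hx).deriv]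
      apply div_nonneg _ (sq_nonneg _)
      set S := Real.sqrt (1 + 2 * g x ^ 2) with hSdef
      set A := g x with hAdef
      set B := g x ^ (p - 1) with hBdef
      have hA : 0 < A := hgpos x hx
      have hB : 0 < B := Real.rpow_pos_of_pos hA _
      have hS0 : S ≠ 0 := (hSpos x).ne'
      have hSq : S ^ 2 = 1 + 2 * A ^ 2 := hSsq x
      have hAp : g x ^ p = B * A := by
        rw [hBdef, hAdef, show p = (p - 1) + 1 by ring, Real.rpow_add_one hA.ne']
        ring_nf
        rfl
      have hkey : A * S ≤ 2 * x := key x hx.le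
      set N : ℝ := ((1 / S) * p * B) * (x * S) -
        g x ^ p * (1 * S + x * (2 * (2 * A ^ 1 * (1 / S)) / (2 * S))) with hNdef
      have hNS : N * S ^ 2 = B * (p * x * S ^ 2 - A * S * S ^ 2 - 2 * x * A ^ 2) := by
        rw [hNdef, hAp]
        field_simp
        ring
      rw [hSq] at hNS
      have h2 : 0 ≤ N * (1 + 2 * A ^ 2) := by
        rw [hNS]
        nlinarith [mul_nonneg hB.le (sub_nonneg.2 hkey),
          mul_nonneg (mul_nonneg hB.le (sq_nonneg A)) (sub_nonneg.2 hkey),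
          mul_nonneg (mul_nonneg hB.le (by linarith : (0:ℝ) ≤ p - 3)) hx.le,
          mul_nonneg (mul_nonneg (mul_nonneg hB.le (by linarith : (0:ℝ) ≤ p - 3)) hx.le)
            (sq_nonneg A), mul_pos hB hx]
      have hpos : (0:ℝ) < 1 + 2 * A ^ 2 := by positivity
      have : 0 ≤ N := by
        by_contra hneg
        push_neg at hneg
        nlinarith
      calc (0:ℝ) ≤ N := this
        _ = _ := by rw [hNdef]
  -- transfer to the original function
  apply hHmono.congr
  intro t ht
  have ht' : (0:ℝ) < t := ht
  simp only [hHdef]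
  rw [hderiv t ht'.le]
  ring
end
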